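/- For the Toda-type Hamiltonian H = ½(p₁²+p₂²+p₃²) + e^{q₁+q₂} + e^{−q₂+q₃} + e^{−q₂−q₃} + e^{−q₁+q₂} on ℝ⁶, the function I = p₁p₂p₃ − p₃(e^{−q₁+q₂} − e^{q₁+q₂}) − p₁(e^{−q₂+q₃} − e^{−q₂−q₃}) Poisson-commutes with H. -/

import Mathlib

noncomputable def H₁₁ (q₁ q₂ q₃ p₁ p₂ p₃ : ℝ) : ℝ :=
  (p₁ ^ 2 + p₂ ^ 2 + p₃ ^ 2) / 2 + Real.exp (q₁ + q₂) + Real.exp (-q₂ + q₃) +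
    Real.exp (-q₂ - q₃) + Real.exp (-q₁ + q₂)

noncomputable def I₁₁ (q₁ q₂ q₃ p₁ p₂ p₃ : ℝ) : ℝ :=
  p₁ * p₂ * p₃ - p₃ * (Real.exp (-q₁ + q₂) - Real.exp (q₁ + q₂)) -
    p₁ * (Real.exp (-q₂ + q₃) - Real.exp (-q₂ - q₃))

/-- Poisson bracket of two functions on ℝ⁶ with coordinates (q₁,q₂,q₃,p₁,p₂,p₃). -/
noncomputable def pb6 (F G : ℝ → ℝ → ℝ → ℝ → ℝ → ℝ → ℝ) (q₁ q₂ q₃ p₁ p₂ p₃ : ℝ) : ℝ :=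
  (deriv (fun x => F x q₂ q₃ p₁ p₂ p₃) q₁) * (deriv (fun x => G q₁ q₂ q₃ x p₂ p₃) p₁) -
  (deriv (fun x => F q₁ q₂ q₃ x p₂ p₃) p₁) * (deriv (fun x => G x q₂ q₃ p₁ p₂ p₃) q₁) +
  (deriv (fun x => F q₁ x q₃ p₁ p₂ p₃) q₂) * (deriv (fun x => G q₁ q₂ q₃ p₁ x p₃) p₂) -
  (deriv (fun x => F q₁ q₂ q₃ p₁ x p₃) p₂) * (deriv (fun x => G q₁ x q₃ p₁ p₂ p₃) q₂) +
  (deriv (fun x => F q₁ q₂ x p₁ p₂ p₃) q₃) * (deriv (fun x => G q₁ q₂ q₃ p₁ p₂ x) p₃) -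
  (deriv (fun x => F q₁ q₂ q₃ p₁ p₂ x) p₃) * (deriv (fun x => G q₁ q₂ x p₁ p₂ p₃) q₃)

/-!
Write `a, b, c, d` for `exp (q₁ + q₂), exp (-q₁ + q₂), exp (-q₂ + q₃), exp (-q₂ - q₃)`.
After substituting the twelve partial derivatives, `{H, I}` is a polynomial in the momenta whose
coefficients of `p₂p₃`, `p₁p₃`, `p₁p₂` cancel pairwise, and whose momentum-free part is
`(a - b)(d - c) + (c - d)(a - b) = 0`.
-/

section PartialDerivatives

variable (q₁ q₂ q₃ p₁ p₂ p₃ : ℝ)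

lemma deriv_H₁₁_q₁ :
    deriv (fun x => H₁₁ x q₂ q₃ p₁ p₂ p₃) q₁ = Real.exp (q₁ + q₂) - Real.exp (-q₁ + q₂) := by
  simp (disch := fun_prop) [H₁₁, deriv_exp]
  ring

lemma deriv_H₁₁_q₂ :
    deriv (fun x => H₁₁ q₁ x q₃ p₁ p₂ p₃) q₂ =
      Real.exp (q₁ + q₂) - Real.exp (-q₂ + q₃) - Real.exp (-q₂ - q₃) + Real.exp (-q₁ + q₂) := by
  simp (disch := fun_prop) [H₁₁, deriv_exp]
  ring

lemma deriv_H₁₁_q₃ :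
    deriv (fun x => H₁₁ q₁ q₂ x p₁ p₂ p₃) q₃ = Real.exp (-q₂ + q₃) - Real.exp (-q₂ - q₃) := by
  simp (disch := fun_prop) [H₁₁, deriv_exp]
  ring

lemma deriv_H₁₁_p₁ : deriv (fun x => H₁₁ q₁ q₂ q₃ x p₂ p₃) p₁ = p₁ := by
  simp [H₁₁]

lemma deriv_H₁₁_p₂ : deriv (fun x => H₁₁ q₁ q₂ q₃ p₁ x p₃) p₂ = p₂ := by
  simp [H₁₁]

lemma deriv_H₁₁_p₃ : deriv (fun x => H₁₁ q₁ q₂ q₃ p₁ p₂ x) p₃ = p₃ := by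
  simp [H₁₁]

lemma deriv_I₁₁_q₁ :
    deriv (fun x => I₁₁ x q₂ q₃ p₁ p₂ p₃) q₁ =
      p₃ * (Real.exp (-q₁ + q₂) + Real.exp (q₁ + q₂)) := by
  simp (disch := fun_prop) [I₁₁, deriv_exp]
  ring

lemma deriv_I₁₁_q₂ :
    deriv (fun x => I₁₁ q₁ x q₃ p₁ p₂ p₃) q₂ =
      -p₃ * (Real.exp (-q₁ + q₂) - Real.exp (q₁ + q₂)) +
        p₁ * (Real.exp (-q₂ + q₃) - Real.exp (-q₂ - q₃)) := by
  simp (disch := fun_prop) [I₁₁, deriv_exp]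
  ring

lemma deriv_I₁₁_q₃ :
    deriv (fun x => I₁₁ q₁ q₂ x p₁ p₂ p₃) q₃ =
      -p₁ * (Real.exp (-q₂ + q₃) + Real.exp (-q₂ - q₃)) := by
  simp (disch := fun_prop) [I₁₁, deriv_exp]

lemma deriv_I₁₁_p₁ :
    deriv (fun x => I₁₁ q₁ q₂ q₃ x p₂ p₃) p₁ =
      p₂ * p₃ - (Real.exp (-q₂ + q₃) - Real.exp (-q₂ - q₃)) := by
  simp (disch := fun_prop) [I₁₁]

lemma deriv_I₁₁_p₂ : deriv (fun x => I₁₁ q₁ q₂ q₃ p₁ x p₃) p₂ = p₁ * p₃ := by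
  simp (disch := fun_prop) [I₁₁]

lemma deriv_I₁₁_p₃ :
    deriv (fun x => I₁₁ q₁ q₂ q₃ p₁ p₂ x) p₃ =
      p₁ * p₂ - (Real.exp (-q₁ + q₂) - Real.exp (q₁ + q₂)) := by
  simp (disch := fun_prop) [I₁₁]

end PartialDerivatives

theorem stmt_11 (q₁ q₂ q₃ p₁ p₂ p₃ : ℝ) : pb6 H₁₁ I₁₁ q₁ q₂ q₃ p₁ p₂ p₃ = 0 := by
  rw [pb6, deriv_H₁₁_q₁, deriv_H₁₁_q₂, deriv_H₁₁_q₃, deriv_H₁₁_p₁, deriv_H₁₁_p₂, deriv_H₁₁_p₃,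
    deriv_I₁₁_q₁, deriv_I₁₁_q₂, deriv_I₁₁_q₃, deriv_I₁₁_p₁, deriv_I₁₁_p₂, deriv_I₁₁_p₃]
  ring
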